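/- arXiv:1810.06477 — 4 statements merged into one kernel-verified Lean document; each statement's English description precedes it below -/
import Mathlib

section
/- Let A be an (n+1)×(n+1) matrix-valued function on ℝ^{n+1} with entries Hölder continuous with exponent α ∈ (0,1] and constant C_h, satisfying A(x_R) = Id for some point x_R, and with |A(x) − Id| ≤ C ℓ^α for all x in a ball of radius comparable to ℓ around x_R. Fix d = Δℓ with Δ ∈ (0,1). Define, for 0 ≤ x_{n+1} ≤ d, B(x) = A(x)(x_{n+1}/d) + Id(1 − x_{n+1}/d), and B(x) = A(x) for x_{n+1} ≥ d. Then, provided ℓ^{α/2} ≤ Δ^α, the matrix B is Hölder continuous with exponent α/2 on the slab {0 ≤ x_{n+1}} ∩ B(x_R, Cℓ), with constant depending only on C_h, C and n; specifically, for 0 ≤ x_{n+1}, y_{n+1} ≤ d one has |B(x) − B(y)| ≤ C'|x−y|^{α/2}. -/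
/-!
With `u = |x - y|`, `d = Δℓ` and `t, s ∈ [0, 1]` the rescaled heights of `x, y`,
`B(x) - B(y) = t (A x - A y) + (t - s) (A y - 1)`.
The first term is `≤ C_h u^α`, and `u^{α/2}` is bounded on the ball, so half of the exponent can be
traded for a constant. In the second term `|t - s| ≤ min 1 (u / d)` and
`|A y - 1| ≤ C ℓ^α ≤ C d^{α/2}`, the latter being exactly where `ℓ^{α/2} ≤ Δ^α` enters;
then `min 1 (u / d) d^{α/2} ≤ u^{α/2}` by comparing `u` with `d`.
-/

open Matrix Set

lemma abs_interp_sub_interp_le (a b c t s : ℝ) :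
    |(t * a + (1 - t) * c) - (s * b + (1 - s) * c)| ≤ |t| * |a - b| + |t - s| * |b - c| := by
  calc |(t * a + (1 - t) * c) - (s * b + (1 - s) * c)|
      = |t * (a - b) + (t - s) * (b - c)| := by ring_nf
    _ ≤ |t| * |a - b| + |t - s| * |b - c| := by
      simpa only [abs_mul] using abs_add_le (t * (a - b)) ((t - s) * (b - c))

lemma abs_div_sub_div_le_min_one {a b d u : ℝ} (hd : 0 < d) (ha : a ∈ Icc 0 d) (hb : b ∈ Icc 0 d)
    (hab : |a - b| ≤ u) : |a / d - b / d| ≤ min 1 (u / d) := by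
  rw [div_sub_div_same, abs_div, abs_of_pos hd, le_min_iff, div_le_one hd]
  refine ⟨abs_sub_le_iff.2 ⟨?_, ?_⟩, by gcongr⟩ <;> linarith [ha.1, ha.2, hb.1, hb.2]

lemma Real.rpow_le_one_add {u β : ℝ} (hu : 0 ≤ u) (hβ0 : 0 ≤ β) (hβ1 : β ≤ 1) :
    u ^ β ≤ 1 + u := by
  rcases le_total u 1 with h | h
  · linarith [Real.rpow_le_one hu h hβ0]
  · linarith [Real.rpow_le_self_of_one_le h hβ1]

lemma Real.rpow_le_one_add_mul_rpow_half {u K α : ℝ} (hu : 0 ≤ u) (huK : u ≤ K) (hα0 : 0 ≤ α)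
    (hα2 : α ≤ 2) : u ^ α ≤ (1 + K) * u ^ (α / 2) := by
  calc u ^ α = u ^ (α / 2) * u ^ (α / 2) := by
        rw [← Real.rpow_add_of_nonneg hu (by positivity) (by positivity), add_halves]
    _ ≤ (1 + K) * u ^ (α / 2) := by
        gcongr
        exact (Real.rpow_le_one_add hu (by positivity) (by linarith)).trans (by linarith)

lemma Real.min_one_div_mul_rpow_le {u d β : ℝ} (hu : 0 ≤ u) (hd : 0 < d) (hβ0 : 0 ≤ β)
    (hβ1 : β ≤ 1) : min 1 (u / d) * d ^ β ≤ u ^ β := by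
  rcases le_total u d with h | h
  · have hud : u / d ≤ 1 := (div_le_one hd).2 h
    calc min 1 (u / d) * d ^ β ≤ (u / d) ^ β * d ^ β := by
          rw [min_eq_right hud]
          gcongr
          simpa using Real.rpow_le_rpow_of_exponent_ge' (by positivity) hud hβ0 hβ1
      _ = u ^ β := by rw [← Real.mul_rpow (by positivity) hd.le, div_mul_cancel₀ u hd.ne']
  · calc min 1 (u / d) * d ^ β ≤ 1 * d ^ β := by gcongr; exact min_le_left _ _
      _ ≤ u ^ β := by rw [one_mul]; gcongr

lemma Real.rpow_le_mul_rpow_half_of_rpow_half_le {Δ ℓ α : ℝ} (hΔ0 : 0 < Δ) (hΔ1 : Δ ≤ 1)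
    (hℓ : 0 < ℓ) (hα : 0 ≤ α) (hsmall : ℓ ^ (α / 2) ≤ Δ ^ α) : ℓ ^ α ≤ (Δ * ℓ) ^ (α / 2) := by
  calc ℓ ^ α = ℓ ^ (α / 2) * ℓ ^ (α / 2) := by rw [← Real.rpow_add hℓ, add_halves]
    _ ≤ Δ ^ (α / 2) * ℓ ^ (α / 2) := by
        gcongr ?_ * _
        exact hsmall.trans (Real.rpow_le_rpow_of_exponent_ge hΔ0 hΔ1 (half_le_self hα))
    _ = (Δ * ℓ) ^ (α / 2) := (Real.mul_rpow hΔ0.le hℓ.le).symm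

lemma Real.le_one_of_rpow_lt_one {ℓ β : ℝ} (hβ : 0 < β) (h : ℓ ^ β < 1) : ℓ ≤ 1 := by
  by_contra! h1
  exact (Real.one_lt_rpow h1 hβ).not_gt h

/-- Interpolating an elliptic Hölder matrix with the identity across a slab of width
`d = Δℓ` only loses half of the Hölder exponent when `ℓ^{α/2} ≤ Δ^α`. -/
theorem stmt_3 (n : ℕ) (C_h C : ℝ) (hCh : 0 < C_h) (hC : 0 < C) :
    ∃ C' : ℝ, 0 < C' ∧
      ∀ (α : ℝ), 0 < α → α ≤ 1 →
      ∀ (Δ : ℝ), 0 < Δ → Δ < 1 →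
      ∀ (ℓ : ℝ), 0 < ℓ →
      ∀ (A : EuclideanSpace ℝ (Fin (n + 1)) → Matrix (Fin (n + 1)) (Fin (n + 1)) ℝ)
        (x_R : EuclideanSpace ℝ (Fin (n + 1))),
      (∀ x y, ∀ i j, |A x i j - A y i j| ≤ C_h * ‖x - y‖ ^ α) →
      A x_R = 1 →
      (∀ x ∈ Metric.closedBall x_R (C * ℓ), ∀ i j,
        |A x i j - (1 : Matrix (Fin (n + 1)) (Fin (n + 1)) ℝ) i j| ≤ C * ℓ ^ α) →
      ℓ ^ (α / 2) ≤ Δ ^ α →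
      ∀ x ∈ Metric.closedBall x_R (C * ℓ), ∀ y ∈ Metric.closedBall x_R (C * ℓ),
        0 ≤ x (Fin.last n) → x (Fin.last n) ≤ Δ * ℓ →
        0 ≤ y (Fin.last n) → y (Fin.last n) ≤ Δ * ℓ →
        ∀ i j,
          |((x (Fin.last n) / (Δ * ℓ)) • A x +
              (1 - x (Fin.last n) / (Δ * ℓ)) • (1 : Matrix (Fin (n + 1)) (Fin (n + 1)) ℝ)) i j -
            ((y (Fin.last n) / (Δ * ℓ)) • A y +
              (1 - y (Fin.last n) / (Δ * ℓ)) • (1 : Matrix (Fin (n + 1)) (Fin (n + 1)) ℝ)) i j|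
            ≤ C' * ‖x - y‖ ^ (α / 2) := by
  refine ⟨C_h * (1 + 2 * C) + C, by positivity, ?_⟩
  intro α hα hα1 Δ hΔ hΔ1 ℓ hℓ A x_R hHol _ hnear hsmall x hx y hy hx0 hx1 hy0 hy1 i j
  have hd : 0 < Δ * ℓ := mul_pos hΔ hℓ
  have hℓ1 : ℓ ≤ 1 :=
    Real.le_one_of_rpow_lt_one (by positivity) (hsmall.trans_lt (Real.rpow_lt_one hΔ.le hΔ1 hα))
  have hu : ‖x - y‖ ≤ 2 * C := by
    have hxy : ‖x - y‖ ≤ C * ℓ + C * ℓ := by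
      rw [← dist_eq_norm]
      exact (dist_triangle_right x y x_R).trans
        (add_le_add (Metric.mem_closedBall.1 hx) (Metric.mem_closedBall.1 hy))
    nlinarith
  set t := x (Fin.last n) / (Δ * ℓ)
  set s := y (Fin.last n) / (Δ * ℓ)
  have ht : |t| ≤ 1 := by
    rw [abs_of_nonneg (by positivity)]
    exact (div_le_one hd).2 hx1
  have hts : |t - s| ≤ min 1 (‖x - y‖ / (Δ * ℓ)) :=
    abs_div_sub_div_le_min_one hd ⟨hx0, hx1⟩ ⟨hy0, hy1⟩
      (by rw [← Real.dist_eq, ← dist_eq_norm]; exact PiLp.dist_apply_le x y _)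
  calc _ ≤ |t| * |A x i j - A y i j| + |t - s| * |A y i j - (1 : Matrix _ _ ℝ) i j| := by
        simpa only [Matrix.add_apply, Matrix.smul_apply, smul_eq_mul]
          using abs_interp_sub_interp_le _ _ _ t s
    _ ≤ 1 * (C_h * ‖x - y‖ ^ α) + min 1 (‖x - y‖ / (Δ * ℓ)) * (C * (Δ * ℓ) ^ (α / 2)) := by
        gcongr
        · exact hHol x y i j
        · exact (hnear y hy i j).trans (mul_le_mul_of_nonneg_left
            (Real.rpow_le_mul_rpow_half_of_rpow_half_le hΔ hΔ1.le hℓ hα.le hsmall) hC.le)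
    _ ≤ C_h * ((1 + 2 * C) * ‖x - y‖ ^ (α / 2)) + C * ‖x - y‖ ^ (α / 2) := by
        rw [one_mul, mul_left_comm]
        gcongr
        · exact Real.rpow_le_one_add_mul_rpow_half (norm_nonneg _) hu hα.le (by linarith)
        · exact Real.min_one_div_mul_rpow_le (norm_nonneg _) hd (by positivity) (by linarith)
    _ = (C_h * (1 + 2 * C) + C) * ‖x - y‖ ^ (α / 2) := by ring
end

section
/- Let μ be an n-AD-regular measure on ℝ^{n+1} with constant C_0 and let {Q_j}_{j ∈ J} be a countable family of subsets of ℝ^{n+1} with associated centers x_j and side lengths ℓ_j > 0 such that: (i) the balls B(x_j, 4ℓ_j) are pairwise disjoint; (ii) ℓ_j^n ≤ C_1 μ(Q_j) and Q_j ⊂ B(x_j, ℓ_j) with x_j ∈ supp μ. Define the measure ξ = Σ_j ℓ_j^{-1} L^{n+1}|_{B(x_j, 3ℓ_j)}, where L^{n+1} is Lebesgue measure. Then ξ has n-polynomial growth: ξ(B(x, r)) ≤ C r^n for all x ∈ ℝ^{n+1} and r > 0, with C depending only on n, C_0, C_1. -/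
/-!
Only the cubes with `dist (x j) z < r + 3 ℓ j` see `B(z, r)`. Those with `ℓ j > r` then have
`z ∈ B(x j, 4 ℓ j)`, so by disjointness at most one of them contributes, and it contributes at
most `ℓ⁻¹ |B(z, r)| ≲ r ^ n`. Those with `ℓ j ≤ r` contribute
`ℓ⁻¹ |B(x j, 3 ℓ j)| ≲ ℓ j ^ n ≲ C₁ μ(Q j)`, and their disjoint sets `Q j` lie in one ball of
radius `9 r` centred on `supp μ`, of measure `≲ r ^ n`.

AD-regularity is only assumed below `diam (supp μ)`; the growth of `μ` at larger radii comes from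
covering `supp μ` by at most `5 ^ (n + 1)` balls of radius `diam (supp μ) / 2`, a packing bound
of Besicovitch type.
-/

open MeasureTheory Metric
open scoped NNReal ENNReal

section Packing

variable {E : Type*} [NormedAddCommGroup E] [NormedSpace ℝ E] [FiniteDimensional ℝ E]

theorem Finset.card_le_of_isSeparated_of_subset_closedBall {ε : ℝ≥0} (hε : 0 < ε) {p : E}
    {s : Finset E} (hs : (s : Set E) ⊆ closedBall p (2 * ε)) (hsep : IsSeparated ε (s : Set E)) :
    s.card ≤ 5 ^ Module.finrank ℝ E := by
  classical
  have hε' : (0 : ℝ) < ε := hε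
  let f : E → E := fun c => (ε : ℝ)⁻¹ • (c - p)
  have hf : Function.Injective f := fun a b h => by
    simpa [f, smul_right_inj (inv_ne_zero hε'.ne')] using h
  rw [← Finset.card_image_of_injective s hf]
  refine Besicovitch.card_le_of_separated _ ?_ ?_
  · simp only [Finset.mem_image]
    rintro _ ⟨c, hc, rfl⟩
    have := mem_closedBall_iff_norm.1 (hs hc)
    simp only [f, norm_smul, norm_inv, Real.norm_eq_abs, abs_of_pos hε']
    rw [inv_mul_le_iff₀ hε']
    linarith
  · simp only [Finset.mem_image]
    rintro _ ⟨c, hc, rfl⟩ _ ⟨d, hd, rfl⟩ hcd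
    have hsep' : (ε : ℝ≥0∞) < edist c d := hsep hc hd (fun h => hcd (h ▸ rfl))
    rw [edist_nndist, ENNReal.coe_lt_coe, ← NNReal.coe_lt_coe, coe_nndist] at hsep'
    simp only [f, ← smul_sub, sub_sub_sub_cancel_right, norm_smul, norm_inv, Real.norm_eq_abs,
      abs_of_pos hε', ← dist_eq_norm]
    rw [le_inv_mul_iff₀ hε']
    linarith

theorem Set.encard_le_of_isSeparated_of_subset_closedBall {ε : ℝ≥0} (hε : 0 < ε) {p : E}
    {C : Set E} (hC : C ⊆ closedBall p (2 * ε)) (hsep : IsSeparated ε C) :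
    C.encard ≤ 5 ^ Module.finrank ℝ E := by
  by_contra! h
  obtain ⟨t, htC, ht⟩ := Set.exists_subset_encard_eq (Order.add_one_le_of_lt h)
  have htfin : t.Finite := Set.finite_of_encard_eq_coe ht
  have hcard := Finset.card_le_of_isSeparated_of_subset_closedBall hε
    (s := htfin.toFinset) (by simpa using htC.trans hC) (by simpa using hsep.subset htC)
  rw [htfin.encard_eq_coe_toFinset_card] at ht
  norm_cast at ht
  omega

theorem exists_isCover_encard_le_of_subset_closedBall {ε : ℝ≥0} (hε : 0 < ε) {p : E}
    {A : Set E} (hA : A ⊆ closedBall p (2 * ε)) :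
    ∃ N ⊆ A, N.encard ≤ 5 ^ Module.finrank ℝ E ∧ IsCover ε A N := by
  have hpack : packingNumber ε A ≤ 5 ^ Module.finrank ℝ E :=
    iSup₂_le fun C hCA => iSup_le fun hsep =>
      Set.encard_le_of_isSeparated_of_subset_closedBall hε (hCA.trans hA) hsep
  have htop : packingNumber ε A ≠ ⊤ := ne_top_of_le_ne_top (by simp) hpack
  exact ⟨_, maximalSeparatedSet_subset, (encard_maximalSeparatedSet htop).trans_le hpack,
    isCover_maximalSeparatedSet htop⟩

end Packing

section Support

theorem MeasureTheory.Measure.support_eq_setOf_measure_ball_pos {X : Type*} [PseudoMetricSpace X]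
    [MeasurableSpace X] (μ : Measure X) :
    μ.support = {w | ∀ ρ : ℝ, 0 < ρ → 0 < μ (ball w ρ)} :=
  Set.ext fun _ => nhds_basis_ball.mem_measureSupport

theorem measure_le_encard_mul_of_isCover {X : Type*} [PseudoMetricSpace X] [MeasurableSpace X]
    (μ : Measure X) {ε : ℝ≥0} {A N : Set X} (hN : IsCover ε A N) (hNc : N.Countable) {c : ℝ≥0∞}
    (hc : ∀ y ∈ N, μ (closedBall y ε) ≤ c) : μ A ≤ N.encard * c :=
  calc μ A ≤ μ (⋃ y ∈ N, closedBall y ε) := measure_mono hN.subset_iUnion_closedBall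
    _ ≤ ∑' y : N, μ (closedBall y ε) := measure_biUnion_le μ hNc _
    _ ≤ ∑' _ : N, c := ENNReal.tsum_le_tsum fun y => hc y y.2
    _ = N.encard * c := ENNReal.tsum_const c

variable {E : Type*} [NormedAddCommGroup E] [NormedSpace ℝ E] [FiniteDimensional ℝ E]
  [MeasurableSpace E]

theorem measure_ball_le_of_measure_ball_le_of_le_ediam (μ : Measure E) {n : ℕ} {C₀ : ℝ}
    (hC₀ : 0 ≤ C₀)
    (hAD : ∀ z ∈ μ.support, ∀ r : ℝ, 0 < r → ENNReal.ofReal r ≤ ediam μ.support →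
      μ (ball z r) ≤ ENNReal.ofReal (C₀ * r ^ n))
    (hdiam : 0 < ediam μ.support) {p : E} (hp : p ∈ μ.support) {R : ℝ} (hR : 0 < R) :
    μ (ball p R) ≤ ENNReal.ofReal (5 ^ Module.finrank ℝ E * C₀ * R ^ n) := by
  have h5 : (1 : ℝ) ≤ 5 ^ Module.finrank ℝ E := one_le_pow₀ (by norm_num)
  rcases le_or_gt (ENNReal.ofReal R) (ediam μ.support) with hle | hlt
  · refine (hAD p hp R hR hle).trans (ENNReal.ofReal_le_ofReal ?_)
    rw [mul_assoc]
    exact le_mul_of_one_le_left (by positivity) h5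
  have hfin : ediam μ.support ≠ ⊤ := (hlt.trans ENNReal.ofReal_lt_top).ne
  set D := diam μ.support
  have hD : ENNReal.ofReal D = ediam μ.support := ENNReal.ofReal_toReal hfin
  have hDpos : 0 < D := ENNReal.toReal_pos hdiam.ne' hfin
  have hDR : D < R := (ENNReal.ofReal_lt_ofReal_iff hR).1 (hD ▸ hlt)
  have hε : (0 : ℝ≥0) < (D / 2).toNNReal := Real.toNNReal_pos.2 (by positivity)
  have hsub : μ.support ⊆ closedBall p (2 * (D / 2).toNNReal) := fun q hq => by
    rw [Real.coe_toNNReal _ (by positivity), mem_closedBall]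
    linarith [dist_le_diam_of_mem' hfin hq hp]
  obtain ⟨N, hNS, hNcard, hN⟩ := exists_isCover_encard_le_of_subset_closedBall hε hsub
  have hball : ∀ y ∈ N, μ (closedBall y (D / 2).toNNReal) ≤ ENNReal.ofReal (C₀ * D ^ n) :=
    fun y hy => (measure_mono (closedBall_subset_ball (by
      rw [Real.coe_toNNReal _ (by positivity)]; linarith))).trans
      (hAD y (hNS hy) D hDpos hD.le)
  have hNc : N.Countable := (Set.finite_of_encard_le_coe hNcard).countable
  calc μ (ball p R) = μ (ball p R ∩ μ.support) :=
        (measure_inter_conull Measure.measure_compl_support).symm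
    _ ≤ μ μ.support := measure_mono Set.inter_subset_right
    _ ≤ N.encard * ENNReal.ofReal (C₀ * D ^ n) := measure_le_encard_mul_of_isCover μ hN hNc hball
    _ ≤ (5 ^ Module.finrank ℝ E : ℕ) * ENNReal.ofReal (C₀ * D ^ n) := by
        gcongr
        exact_mod_cast hNcard
    _ ≤ ENNReal.ofReal (5 ^ Module.finrank ℝ E * C₀ * R ^ n) := by
        rw [← ENNReal.ofReal_natCast, ← ENNReal.ofReal_mul (by positivity), mul_assoc]
        push_cast
        gcongr

end Support

section HaarBalls

variable {E : Type*} [NormedAddCommGroup E] [NormedSpace ℝ E] [FiniteDimensional ℝ E]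
  [MeasurableSpace E] [BorelSpace E] {n : ℕ} (ν : Measure E) [ν.IsAddHaarMeasure]

theorem inv_mul_addHaar_ball_three_mul (hd : Module.finrank ℝ E = n + 1) (x : E) {ℓ : ℝ}
    (hℓ : 0 < ℓ) :
    ENNReal.ofReal ℓ⁻¹ * ν (ball x (3 * ℓ)) =
      ENNReal.ofReal (3 ^ (n + 1) * ℓ ^ n) * ν (ball 0 1) := by
  rw [Measure.addHaar_ball_of_pos ν x (by positivity), hd, ← mul_assoc,
    ← ENNReal.ofReal_mul (by positivity)]
  congr 2
  rw [mul_pow, pow_succ ℓ]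
  field_simp

theorem inv_mul_addHaar_ball_inter_ball_le (hd : Module.finrank ℝ E = n + 1) (z x : E)
    {r ℓ : ℝ} (hr : 0 < r) (hℓ : 0 < ℓ) :
    ENNReal.ofReal ℓ⁻¹ * ν (ball z r ∩ ball x (3 * ℓ)) ≤
      ENNReal.ofReal (3 ^ (n + 1) * r ^ n) * ν (ball 0 1) := by
  rcases le_or_gt ℓ r with hℓr | hrℓ
  · calc ENNReal.ofReal ℓ⁻¹ * ν (ball z r ∩ ball x (3 * ℓ))
        ≤ ENNReal.ofReal ℓ⁻¹ * ν (ball x (3 * ℓ)) := by gcongr; exact Set.inter_subset_right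
      _ = ENNReal.ofReal (3 ^ (n + 1) * ℓ ^ n) * ν (ball 0 1) :=
          inv_mul_addHaar_ball_three_mul ν hd x hℓ
      _ ≤ ENNReal.ofReal (3 ^ (n + 1) * r ^ n) * ν (ball 0 1) := by gcongr
  · calc ENNReal.ofReal ℓ⁻¹ * ν (ball z r ∩ ball x (3 * ℓ))
        ≤ ENNReal.ofReal ℓ⁻¹ * ν (ball z r) := by gcongr; exact Set.inter_subset_left
      _ = ENNReal.ofReal (r / ℓ * r ^ n) * ν (ball 0 1) := by
          rw [Measure.addHaar_ball_of_pos ν z hr, hd, ← mul_assoc,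
            ← ENNReal.ofReal_mul (by positivity), pow_succ]
          congr 2
          ring
      _ ≤ ENNReal.ofReal (3 ^ (n + 1) * r ^ n) * ν (ball 0 1) := by
          gcongr
          calc r / ℓ ≤ 1 := (div_le_one hℓ).2 hrℓ.le
            _ ≤ 3 ^ (n + 1) := one_le_pow₀ (by norm_num)

theorem inv_mul_addHaar_ball_inter_ball_le_mul_measure (hd : Module.finrank ℝ E = n + 1)
    (μ : Measure E) {C₁ : ℝ} {Q : Set E} {ℓ : ℝ} (hℓ : 0 < ℓ)
    (hQμ : ENNReal.ofReal (ℓ ^ n) ≤ ENNReal.ofReal C₁ * μ Q) (z x : E) (r : ℝ) :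
    ENNReal.ofReal ℓ⁻¹ * ν (ball z r ∩ ball x (3 * ℓ)) ≤
      ENNReal.ofReal (3 ^ (n + 1) * C₁) * ν (ball 0 1) * μ Q :=
  calc ENNReal.ofReal ℓ⁻¹ * ν (ball z r ∩ ball x (3 * ℓ))
      ≤ ENNReal.ofReal ℓ⁻¹ * ν (ball x (3 * ℓ)) := by gcongr; exact Set.inter_subset_right
    _ = ENNReal.ofReal (3 ^ (n + 1)) * ν (ball 0 1) * ENNReal.ofReal (ℓ ^ n) := by
        rw [inv_mul_addHaar_ball_three_mul ν hd _ hℓ, ENNReal.ofReal_mul (by positivity)]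
        ring
    _ ≤ ENNReal.ofReal (3 ^ (n + 1)) * ν (ball 0 1) * (ENNReal.ofReal C₁ * μ Q) := by gcongr
    _ = ENNReal.ofReal (3 ^ (n + 1) * C₁) * ν (ball 0 1) * μ Q := by
        rw [ENNReal.ofReal_mul (by positivity)]
        ring

end HaarBalls

theorem ENNReal.tsum_le_of_subsingleton_support {ι : Type*} {f : ι → ℝ≥0∞} {c : ℝ≥0∞}
    (hf : (Function.support f).Subsingleton) (hc : ∀ i, f i ≤ c) : ∑' i, f i ≤ c := by
  rcases hf.eq_empty_or_singleton with h | ⟨i, hi⟩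
  · simp [Function.support_eq_empty_iff.1 h]
  · rw [tsum_eq_single i fun j hj => Function.notMem_support.1 (hi ▸ hj)]
    exact hc i

theorem MeasureTheory.tsum_measure_le_measure_iUnion_of_subset {α ι : Type*} [MeasurableSpace α]
    [Countable ι] (μ : Measure α) {Q B : ι → Set α} (hQB : ∀ i, Q i ⊆ B i)
    (hB : ∀ i, MeasurableSet (B i)) (hdisj : Pairwise (Function.onFun Disjoint B)) :
    ∑' i, μ (Q i) ≤ μ (⋃ i, Q i) :=
  calc ∑' i, μ (Q i) ≤ ∑' i, μ.restrict (B i) (⋃ j, Q j) := ENNReal.tsum_le_tsum fun i =>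
        (measure_mono (Set.subset_inter (Set.subset_iUnion Q i) (hQB i))).trans
          (Measure.le_restrict_apply _ _)
    _ = μ.restrict (⋃ i, B i) (⋃ j, Q j) := by
        rw [Measure.restrict_iUnion hdisj hB, Measure.sum_apply_of_countable]
    _ ≤ μ (⋃ j, Q j) := Measure.restrict_apply_le _ _

section WeightedBalls

variable {X : Type*} [PseudoMetricSpace X] [MeasurableSpace X] {ν : Measure X}
  {J : Type*} {x : J → X} {ℓ : J → ℝ}

theorem dist_lt_of_measure_ball_inter_ball_ne_zero {z y : X} {r ρ : ℝ}
    (h : ν (ball z r ∩ ball y ρ) ≠ 0) : dist y z < r + ρ := by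
  obtain ⟨w, hwz, hwy⟩ := nonempty_of_measure_ne_zero h
  rw [mem_ball] at hwz hwy
  linarith [dist_triangle_left y z w]

noncomputable def weightedBallsMeasure (ν : Measure X) (x : J → X) (ℓ : J → ℝ) : Measure X :=
  Measure.sum fun j => ENNReal.ofReal (ℓ j)⁻¹ • ν.restrict (ball (x j) (3 * ℓ j))

theorem weightedBallsMeasure_ball [OpensMeasurableSpace X] (z : X) (r : ℝ) :
    weightedBallsMeasure ν x ℓ (ball z r) =
      ∑' j, ENNReal.ofReal (ℓ j)⁻¹ * ν (ball z r ∩ ball (x j) (3 * ℓ j)) := by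
  simp only [weightedBallsMeasure, Measure.sum_apply _ measurableSet_ball, Measure.smul_apply,
    Measure.restrict_apply measurableSet_ball, smul_eq_mul]

end WeightedBalls

section WeightedBallsGrowth

variable {E : Type*} [NormedAddCommGroup E] [NormedSpace ℝ E] [FiniteDimensional ℝ E]
  [MeasurableSpace E] [BorelSpace E] {n : ℕ} {ν : Measure E} [ν.IsAddHaarMeasure]
  {J : Type*} {x : J → E} {ℓ : J → ℝ}

theorem tsum_indicator_large_le (hd : Module.finrank ℝ E = n + 1) (hℓ : ∀ j, 0 < ℓ j)
    (hdisj : Pairwise fun i j => Disjoint (ball (x i) (4 * ℓ i)) (ball (x j) (4 * ℓ j)))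
    (z : E) {r : ℝ} (hr : 0 < r) :
    ∑' j, {j | r < ℓ j}.indicator
        (fun j => ENNReal.ofReal (ℓ j)⁻¹ * ν (ball z r ∩ ball (x j) (3 * ℓ j))) j ≤
      ENNReal.ofReal (3 ^ (n + 1) * r ^ n) * ν (ball 0 1) := by
  refine ENNReal.tsum_le_of_subsingleton_support (fun i hi j hj => ?_) fun j =>
    (Set.indicator_le_self _ _ j).trans (inv_mul_addHaar_ball_inter_ball_le ν hd z _ hr (hℓ j))
  have hz : ∀ j, Set.indicator {j | r < ℓ j}
      (fun j => ENNReal.ofReal (ℓ j)⁻¹ * ν (ball z r ∩ ball (x j) (3 * ℓ j))) j ≠ 0 →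
      z ∈ ball (x j) (4 * ℓ j) := fun j hj => by
    obtain ⟨hrj, hj⟩ := Set.indicator_apply_ne_zero.1 hj
    have := dist_lt_of_measure_ball_inter_ball_ne_zero (right_ne_zero_of_mul hj)
    rw [mem_ball, dist_comm]
    linarith [show r < ℓ j from hrj]
  by_contra hij
  exact Set.disjoint_left.1 (hdisj hij) (hz i hi) (hz j hj)

theorem tsum_indicator_small_le_of_ediam_pos (hd : Module.finrank ℝ E = n + 1) (μ : Measure E)
    {C₀ C₁ : ℝ} (hC₀ : 0 ≤ C₀) (hC₁ : 0 ≤ C₁)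
    (hAD : ∀ z ∈ μ.support, ∀ r : ℝ, 0 < r → ENNReal.ofReal r ≤ ediam μ.support →
      μ (ball z r) ≤ ENNReal.ofReal (C₀ * r ^ n))
    (hdiam : 0 < ediam μ.support) [Countable J] {Q : J → Set E} (hℓ : ∀ j, 0 < ℓ j)
    (hdisj : Pairwise fun i j => Disjoint (ball (x i) (4 * ℓ i)) (ball (x j) (4 * ℓ j)))
    (hQμ : ∀ j, ENNReal.ofReal (ℓ j ^ n) ≤ ENNReal.ofReal C₁ * μ (Q j))
    (hQ : ∀ j, Q j ⊆ ball (x j) (ℓ j)) {z : E} {r : ℝ} (hr : 0 < r) {i₀ : J}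
    (hi₀ : x i₀ ∈ μ.support) (hi₀r : ℓ i₀ ≤ r) (hi₀z : dist (x i₀) z < r + 3 * ℓ i₀) :
    ∑' j, {j | ℓ j ≤ r}.indicator
        (fun j => ENNReal.ofReal (ℓ j)⁻¹ * ν (ball z r ∩ ball (x j) (3 * ℓ j))) j ≤
      ENNReal.ofReal (3 ^ (n + 1) * (C₁ * 5 ^ (n + 1) * C₀ * 9 ^ n) * r ^ n) * ν (ball 0 1) := by
  set B := ball (x i₀) (9 * r)
  set c := ENNReal.ofReal (3 ^ (n + 1) * C₁) * ν (ball 0 1)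
  have hterm : ∀ j, {j | ℓ j ≤ r}.indicator
      (fun j => ENNReal.ofReal (ℓ j)⁻¹ * ν (ball z r ∩ ball (x j) (3 * ℓ j))) j ≤
        c * μ (Q j ∩ B) := by
    intro j
    by_cases hj : {j | ℓ j ≤ r}.indicator
      (fun j => ENNReal.ofReal (ℓ j)⁻¹ * ν (ball z r ∩ ball (x j) (3 * ℓ j))) j = 0
    · exact hj ▸ zero_le
    obtain ⟨hjr, hj⟩ := Set.indicator_apply_ne_zero.1 hj
    have hjz := dist_lt_of_measure_ball_inter_ball_ne_zero (right_ne_zero_of_mul hj)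
    have hQB : Q j ⊆ B := (hQ j).trans (ball_subset_ball' (by
      linarith [show ℓ j ≤ r from hjr, dist_triangle_right (x j) (x i₀) z]))
    rw [Set.inter_eq_left.2 hQB]
    exact (Set.indicator_le_self _ _ j).trans
      (inv_mul_addHaar_ball_inter_ball_le_mul_measure ν hd μ (hℓ j) (hQμ j) _ _ _)
  calc _ ≤ ∑' j, c * μ (Q j ∩ B) := ENNReal.tsum_le_tsum hterm
    _ = c * ∑' j, μ (Q j ∩ B) := ENNReal.tsum_mul_left
    _ ≤ c * μ B := by
        gcongr
        refine (tsum_measure_le_measure_iUnion_of_subset μ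
          (fun j => Set.inter_subset_left.trans ((hQ j).trans (ball_subset_ball ?_)))
          (fun _ => measurableSet_ball) hdisj).trans
          (measure_mono (Set.iUnion_subset fun j => Set.inter_subset_right))
        linarith [hℓ j]
    _ ≤ c * ENNReal.ofReal (5 ^ (n + 1) * C₀ * (9 * r) ^ n) := by
        gcongr
        simpa only [hd] using measure_ball_le_of_measure_ball_le_of_le_ediam μ hC₀ hAD
          hdiam hi₀ (by positivity : 0 < 9 * r)
    _ = _ := by
        rw [mul_right_comm, ← ENNReal.ofReal_mul (by positivity)]
        ring_nf

theorem tsum_indicator_small_le (hd : Module.finrank ℝ E = n + 1) (μ : Measure E)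
    {C₀ C₁ : ℝ} (hC₀ : 0 ≤ C₀) (hC₁ : 0 ≤ C₁)
    (hAD : ∀ z ∈ μ.support, ∀ r : ℝ, 0 < r → ENNReal.ofReal r ≤ ediam μ.support →
      μ (ball z r) ≤ ENNReal.ofReal (C₀ * r ^ n))
    [Countable J] {Q : J → Set E} (hℓ : ∀ j, 0 < ℓ j)
    (hdisj : Pairwise fun i j => Disjoint (ball (x i) (4 * ℓ i)) (ball (x j) (4 * ℓ j)))
    (hQμ : ∀ j, ENNReal.ofReal (ℓ j ^ n) ≤ ENNReal.ofReal C₁ * μ (Q j))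
    (hQ : ∀ j, Q j ⊆ ball (x j) (ℓ j)) (hx : ∀ j, x j ∈ μ.support) (z : E) {r : ℝ} (hr : 0 < r) :
    ∑' j, {j | ℓ j ≤ r}.indicator
        (fun j => ENNReal.ofReal (ℓ j)⁻¹ * ν (ball z r ∩ ball (x j) (3 * ℓ j))) j ≤
      ENNReal.ofReal (3 ^ (n + 1) * r ^ n) * ν (ball 0 1) +
        ENNReal.ofReal (3 ^ (n + 1) * (C₁ * 5 ^ (n + 1) * C₀ * 9 ^ n) * r ^ n) * ν (ball 0 1) := by
  set f := {j | ℓ j ≤ r}.indicator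
    (fun j => ENNReal.ofReal (ℓ j)⁻¹ * ν (ball z r ∩ ball (x j) (3 * ℓ j)))
  by_cases hsub : (Function.support f).Subsingleton
  · exact (ENNReal.tsum_le_of_subsingleton_support hsub fun j => (Set.indicator_le_self _ _ j).trans
      (inv_mul_addHaar_ball_inter_ball_le ν hd z _ hr (hℓ j))).trans le_self_add
  obtain ⟨i₀, hi₀, j₀, -, hne⟩ : ∃ i ∈ Function.support f, ∃ j ∈ Function.support f, i ≠ j := by
    simpa [Set.Subsingleton] using hsub
  obtain ⟨hi₀r, hi₀⟩ := Set.indicator_apply_ne_zero.1 hi₀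
  -- Two indices give two points of the support, so the growth bound applies.
  have hdiam : 0 < ediam μ.support := by
    refine ediam_pos_iff.2 ⟨x i₀, hx i₀, x j₀, hx j₀, fun h => ?_⟩
    refine Set.disjoint_left.1 (hdisj hne) (mem_ball_self (by linarith [hℓ i₀])) ?_
    exact h ▸ mem_ball_self (by linarith [hℓ j₀])
  exact (tsum_indicator_small_le_of_ediam_pos hd μ hC₀ hC₁ hAD hdiam hℓ hdisj hQμ hQ hr (hx i₀)
    hi₀r (dist_lt_of_measure_ball_inter_ball_ne_zero (right_ne_zero_of_mul hi₀))).trans le_add_self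

theorem weightedBallsMeasure_ball_le (hd : Module.finrank ℝ E = n + 1) (μ : Measure E)
    {C₀ C₁ : ℝ} (hC₀ : 0 ≤ C₀) (hC₁ : 0 ≤ C₁)
    (hAD : ∀ z ∈ μ.support, ∀ r : ℝ, 0 < r → ENNReal.ofReal r ≤ ediam μ.support →
      μ (ball z r) ≤ ENNReal.ofReal (C₀ * r ^ n))
    [Countable J] {Q : J → Set E} (hℓ : ∀ j, 0 < ℓ j)
    (hdisj : Pairwise fun i j => Disjoint (ball (x i) (4 * ℓ i)) (ball (x j) (4 * ℓ j)))
    (hQμ : ∀ j, ENNReal.ofReal (ℓ j ^ n) ≤ ENNReal.ofReal C₁ * μ (Q j))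
    (hQ : ∀ j, Q j ⊆ ball (x j) (ℓ j)) (hx : ∀ j, x j ∈ μ.support) (z : E) {r : ℝ} (hr : 0 < r) :
    weightedBallsMeasure ν x ℓ (ball z r) ≤
      ENNReal.ofReal (3 ^ (n + 1) * (2 + C₁ * 5 ^ (n + 1) * C₀ * 9 ^ n) * r ^ n) *
        ν (ball 0 1) := by
  set T := fun j => ENNReal.ofReal (ℓ j)⁻¹ * ν (ball z r ∩ ball (x j) (3 * ℓ j))
  have hsplit : ∀ j, T j = {j | ℓ j ≤ r}.indicator T j + {j | r < ℓ j}.indicator T j := by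
    intro j
    rcases le_or_gt (ℓ j) r with h | h
    · simp [Set.indicator, h, not_lt.2 h]
    · simp [Set.indicator, h, not_le.2 h]
  calc weightedBallsMeasure ν x ℓ (ball z r) = ∑' j, T j := weightedBallsMeasure_ball z r
    _ = ∑' j, {j | ℓ j ≤ r}.indicator T j + ∑' j, {j | r < ℓ j}.indicator T j := by
        rw [← ENNReal.tsum_add]
        exact tsum_congr hsplit
    _ ≤ ENNReal.ofReal (3 ^ (n + 1) * r ^ n) * ν (ball 0 1) +
          ENNReal.ofReal (3 ^ (n + 1) * (C₁ * 5 ^ (n + 1) * C₀ * 9 ^ n) * r ^ n) * ν (ball 0 1) +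
          ENNReal.ofReal (3 ^ (n + 1) * r ^ n) * ν (ball 0 1) :=
        add_le_add (tsum_indicator_small_le hd μ hC₀ hC₁ hAD hℓ hdisj hQμ hQ hx z hr)
          (tsum_indicator_large_le hd hℓ hdisj z hr)
    _ = _ := by
        rw [← add_mul, ← add_mul, ← ENNReal.ofReal_add (by positivity) (by positivity),
          ← ENNReal.ofReal_add (by positivity) (by positivity)]
        ring_nf

end WeightedBallsGrowth

/-- The auxiliary measure `ξ = Σ_j ℓ_j^{-1} L^{n+1}|_{B(x_j,3ℓ_j)}` built from cubes
inside pairwise disjoint balls over an `n`-AD-regular measure has `n`-polynomial growth. -/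
theorem stmt_7 (n : ℕ) (C₀ C₁ : ℝ) (hC₀ : 0 < C₀) (hC₁ : 0 < C₁) :
    ∃ C : ℝ, 0 < C ∧
      ∀ (μ : Measure (EuclideanSpace ℝ (Fin (n + 1))))
        (J : Type) [Countable J],
      ∀ (Q : J → Set (EuclideanSpace ℝ (Fin (n + 1))))
        (x : J → EuclideanSpace ℝ (Fin (n + 1)))
        (ℓ : J → ℝ),
        -- μ is n-AD-regular with constant C₀
        (∀ z ∈ {w : EuclideanSpace ℝ (Fin (n + 1)) |
            ∀ ρ : ℝ, 0 < ρ → 0 < μ (Metric.ball w ρ)},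
          ∀ r : ℝ, 0 < r →
            ENNReal.ofReal r ≤ EMetric.diam {w : EuclideanSpace ℝ (Fin (n + 1)) |
              ∀ ρ : ℝ, 0 < ρ → 0 < μ (Metric.ball w ρ)} →
            ENNReal.ofReal (C₀⁻¹ * r ^ n) ≤ μ (Metric.ball z r) ∧
              μ (Metric.ball z r) ≤ ENNReal.ofReal (C₀ * r ^ n)) →
        (∀ j, 0 < ℓ j) →
        -- (i) the balls B(x_j, 4ℓ_j) are pairwise disjoint
        (Pairwise fun i j =>
          Disjoint (Metric.ball (x i) (4 * ℓ i)) (Metric.ball (x j) (4 * ℓ j))) →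
        -- (ii) ℓ_j^n ≤ C₁ μ(Q_j), Q_j ⊆ B(x_j, ℓ_j), x_j ∈ supp μ
        (∀ j, ENNReal.ofReal (ℓ j ^ n) ≤ ENNReal.ofReal C₁ * μ (Q j)) →
        (∀ j, Q j ⊆ Metric.ball (x j) (ℓ j)) →
        (∀ j, x j ∈ {w : EuclideanSpace ℝ (Fin (n + 1)) |
          ∀ ρ : ℝ, 0 < ρ → 0 < μ (Metric.ball w ρ)}) →
        ∀ (z : EuclideanSpace ℝ (Fin (n + 1))) (r : ℝ), 0 < r →
          (Measure.sum fun j => (ENNReal.ofReal ((ℓ j)⁻¹)) •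
              (volume.restrict (Metric.ball (x j) (3 * ℓ j)))) (Metric.ball z r)
            ≤ ENNReal.ofReal (C * r ^ n) := by
  set ω := volume (ball (0 : EuclideanSpace ℝ (Fin (n + 1))) 1)
  have hω : 0 < ω.toReal := ENNReal.toReal_pos (measure_ball_pos _ _ one_pos).ne'
    measure_ball_lt_top.ne
  refine ⟨3 ^ (n + 1) * (2 + C₁ * 5 ^ (n + 1) * C₀ * 9 ^ n) * ω.toReal, by positivity, ?_⟩
  intro μ J _ Q x ℓ hAD hℓ hdisj hQμ hQ hx z r hr
  rw [← Measure.support_eq_setOf_measure_ball_pos] at hAD hx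
  calc weightedBallsMeasure volume x ℓ (ball z r)
      ≤ ENNReal.ofReal (3 ^ (n + 1) * (2 + C₁ * 5 ^ (n + 1) * C₀ * 9 ^ n) * r ^ n) * ω :=
        weightedBallsMeasure_ball_le finrank_euclideanSpace_fin μ hC₀.le hC₁.le
          (fun z hz r hr hle => (hAD z hz r hr hle).2) hℓ hdisj hQμ hQ hx z hr
    _ = _ := by
        rw [eq_comm, mul_right_comm _ ω.toReal, ENNReal.ofReal_mul (by positivity),
          ENNReal.ofReal_toReal measure_ball_lt_top.ne]
end

section
/- Let h: ℝ^{n+1} → ℝ be a continuous compactly supported function, v a unit vector, and suppose there is a constant m > 0 such that for every x, the set {t ∈ ℝ : h(x + t v) ≠ 0} has one-dimensional Lebesgue measure at most m. Define g(x) = ∫_{−∞}^0 h(x + t v) dt. Then g is well defined, the directional derivative of g along v equals h, and ‖g‖_∞ ≤ m ‖h‖_∞. More generally, if h is C^j, then |∇^j g(x)| ≤ m sup |∇^j h| for every x. -/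
/-!
Write `g x = ∫_{-∞}^0 h (x + t v) dt`. On each line parallel to `v` this is a primitive of `h`,
so `∇_v g = h`, and differentiating under the integral sign gives
`∇^j g x = ∫_{-∞}^0 ∇^j h (x + t v) dt`. Hence `|∇^j g x| ≤ sup |∇^j h| · λ`, where `λ` is the
length of `{t | ∇^j h (x + t v) ≠ 0}`; for `j = 0` this length is at most `m`.

For `j > 0`, `∇^j h` need not vanish where `h` does, but the set `{h = 0, ∇^j h ≠ 0}` is null:
it is covered by the sets `{F = 0, ∂_u F ≠ 0}` with `F = ∇^k h`, `k < j`, and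
`u` a basis vector; such a set meets every line parallel to `u` in isolated points, so it is null
by Fubini. By Fubini again, almost every line parallel to `v` meets `{h = 0, ∇^j h ≠ 0}` in a null
set, so the bound holds almost everywhere, and everywhere since `∇^j g` is continuous.
-/

open MeasureTheory Set Filter Topology

variable {E W : Type*} [NormedAddCommGroup E] [NormedSpace ℝ E] [NormedAddCommGroup W]

theorem norm_le_sSup_range_norm {X : Type*} [TopologicalSpace X] {F : X → W}
    (hF : Continuous F) (hsupp : HasCompactSupport F) (y : X) :
    ‖F y‖ ≤ sSup (range fun z => ‖F z‖) :=
  le_csSup (hF.norm.bddAbove_range_of_hasCompactSupport hsupp.norm) (mem_range_self y)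

theorem hasDerivAt_integral_Iic [NormedSpace ℝ W] [CompleteSpace W] {φ : ℝ → W}
    (hφ : Continuous φ) (hint : Integrable φ) (a : ℝ) :
    HasDerivAt (fun s => ∫ t in Iic s, φ t) (φ a) a := by
  have hsplit : (fun s => ∫ t in Iic s, φ t) = fun s => (∫ t in Iic a, φ t) + ∫ t in a..s, φ t :=
    funext fun s => by
      rw [← intervalIntegral.integral_Iic_sub_Iic hint.integrableOn hint.integrableOn]
      abel
  rw [hsplit]
  exact (intervalIntegral.integral_hasDerivAt_right hint.intervalIntegrable
    hφ.aestronglyMeasurable.stronglyMeasurableAtFilter hφ.continuousAt).const_add _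

theorem countable_setOf_eq_zero_deriv_ne_zero [NormedSpace ℝ W] (φ : ℝ → W) :
    {t | φ t = 0 ∧ deriv φ t ≠ 0}.Countable := by
  refine (HereditarilyLindelofSpace.isLindelof _).countable_of_isDiscrete
    (isDiscrete_iff_nhdsNE.mpr fun t ht => inf_principal_eq_bot.mpr ?_)
  filter_upwards [(differentiableAt_of_deriv_ne_zero ht.2).hasDerivAt.eventually_ne ht.2]
    with s hs hS
  exact hs (hS.1.trans ht.1.symm)

theorem HasCompactSupport.comp_line {F : E → W} {v : E} (hF : HasCompactSupport F) (hv : v ≠ 0)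
    (x : E) : HasCompactSupport fun t : ℝ => F (x + t • v) :=
  hF.comp_isClosedEmbedding ((Homeomorph.addLeft x).isClosedEmbedding.comp
    (isClosedEmbedding_smul_left hv))

theorem Continuous.integrable_comp_line {F : E → W} {v : E} (hF : Continuous F)
    (hsupp : HasCompactSupport F) (hv : v ≠ 0) (x : E) :
    Integrable fun t : ℝ => F (x + t • v) :=
  (hF.comp (by fun_prop)).integrable_of_hasCompactSupport (hsupp.comp_line hv x)

theorem Continuous.exists_integrable_bound_comp_line {G : E → W} {v : E} (hG : Continuous G)
    (hsupp : HasCompactSupport G) (hv : v ≠ 0) (x₀ : E) :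
    ∃ bound : ℝ → ℝ, Integrable bound ∧ ∀ᶠ y in 𝓝 x₀, ∀ t, ‖G (y + t • v)‖ ≤ bound t := by
  obtain ⟨R, hR⟩ := hsupp.isBounded.subset_closedBall 0
  obtain ⟨C, hC⟩ := hsupp.exists_bound_of_continuous hG
  set T := (‖x₀‖ + 1 + R) / ‖v‖
  refine ⟨(Icc (-T) T).indicator fun _ => C, ?_, ?_⟩
  · exact (integrable_indicator_iff measurableSet_Icc).mpr
      (integrableOn_const measure_Icc_lt_top.ne)
  filter_upwards [Metric.ball_mem_nhds x₀ one_pos] with y hy t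
  by_cases ht : y + t • v ∈ tsupport G
  · have hline : |t| * ‖v‖ ≤ ‖x₀‖ + 1 + R := by
      have hyt : ‖y + t • v‖ ≤ R := mem_closedBall_zero_iff.mp (hR ht)
      have hy' : ‖y‖ < ‖x₀‖ + 1 := by
        have := norm_le_norm_add_norm_sub' y x₀
        rw [mem_ball_iff_norm] at hy
        linarith
      have htv : ‖t • v‖ ≤ ‖y + t • v‖ + ‖y‖ := by
        simpa using norm_sub_le (y + t • v) y
      rw [norm_smul, Real.norm_eq_abs] at htv
      linarith
    have hT : t ∈ Icc (-T) T := abs_le.mp ((le_div_iff₀ (norm_pos_iff.mpr hv)).mpr hline)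
    rw [indicator_of_mem hT]
    exact hC _
  · rw [image_eq_zero_of_notMem_tsupport ht, norm_zero]
    exact indicator_nonneg (fun _ _ => (norm_nonneg _).trans (hC 0)) t

noncomputable def rayIntegral [NormedSpace ℝ W] (F : E → W) (v x : E) : W :=
  ∫ t in Iio (0 : ℝ), F (x + t • v)

section RayIntegral

variable [NormedSpace ℝ W] {F : E → W} {v : E}

theorem rayIntegral_add_smul (F : E → W) (v x : E) (s : ℝ) :
    rayIntegral F v (x + s • v) = ∫ t in Iic s, F (x + t • v) := by
  have hshift := (measurePreserving_add_right volume s).setIntegral_preimage_emb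
    (measurableEmbedding_addRight s) (fun t => F (x + t • v)) (Iio s)
  rw [preimage_add_const_Iio, sub_self] at hshift
  rw [← setIntegral_congr_set Iio_ae_eq_Iic, ← hshift, rayIntegral]
  simp only [add_smul, add_assoc, add_comm (s • v)]

theorem lineDeriv_rayIntegral [CompleteSpace W] (hF : Continuous F) (hsupp : HasCompactSupport F)
    (hv : v ≠ 0) (x : E) : lineDeriv ℝ (rayIntegral F v) x v = F x := by
  have hderiv := hasDerivAt_integral_Iic (hF.comp (by fun_prop : Continuous fun t : ℝ => x + t • v))
    (hF.integrable_comp_line hsupp hv x) 0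
  simp only [Function.comp_apply, zero_smul, add_zero] at hderiv
  rw [lineDeriv, funext (rayIntegral_add_smul F v x)]
  exact hderiv.deriv

theorem norm_rayIntegral_le {x : E} {m C : ℝ} (hm : 0 ≤ m) (hC : ∀ y, ‖F y‖ ≤ C)
    (hline : volume {t : ℝ | F (x + t • v) ≠ 0} ≤ ENNReal.ofReal m) :
    ‖rayIntegral F v x‖ ≤ m * C := by
  set S := {t : ℝ | F (x + t • v) ≠ 0}
  have hS : volume (Iio 0 ∩ S) ≤ ENNReal.ofReal m := (measure_mono inter_subset_right).trans hline
  have hrestrict : rayIntegral F v x = ∫ t in Iio 0 ∩ S, F (x + t • v) :=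
    setIntegral_eq_of_subset_of_forall_sdiff_eq_zero (f := fun t => F (x + t • v))
      (s := Iio 0 ∩ S) measurableSet_Iio inter_subset_left
      fun t ht => not_not.mp fun h => ht.2 ⟨ht.1, h⟩
  calc ‖rayIntegral F v x‖ ≤ C * volume.real (Iio 0 ∩ S) := by
        rw [hrestrict]
        exact norm_setIntegral_le_of_norm_le_const (hS.trans_lt ENNReal.ofReal_lt_top)
          fun t _ => hC _
    _ ≤ C * m := by
        gcongr
        · exact (norm_nonneg _).trans (hC x)
        · exact ENNReal.toReal_le_of_le_ofReal hm hS
    _ = m * C := mul_comm _ _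

theorem continuous_rayIntegral (hF : Continuous F) (hsupp : HasCompactSupport F) (hv : v ≠ 0) :
    Continuous (rayIntegral F v) := by
  refine continuous_iff_continuousAt.mpr fun x₀ => ?_
  obtain ⟨bound, hint, hbound⟩ := hF.exists_integrable_bound_comp_line hsupp hv x₀
  exact continuousAt_of_dominated
    (Eventually.of_forall fun y => (hF.comp (by fun_prop)).aestronglyMeasurable)
    (hbound.mono fun y hy => ae_of_all _ hy) hint.restrict
    (ae_of_all _ fun t => (hF.comp (by fun_prop)).continuousAt)

theorem hasFDerivAt_rayIntegral [CompleteSpace W] (hF : ContDiff ℝ 1 F)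
    (hsupp : HasCompactSupport F) (hv : v ≠ 0) (x₀ : E) :
    HasFDerivAt (rayIntegral F v) (rayIntegral (fderiv ℝ F) v x₀) x₀ := by
  have hF' : Continuous (fderiv ℝ F) := hF.continuous_fderiv one_ne_zero
  obtain ⟨bound, hint, hbound⟩ :=
    hF'.exists_integrable_bound_comp_line (hsupp.fderiv (𝕜 := ℝ)) hv x₀
  exact hasFDerivAt_integral_of_dominated_of_fderiv_le (μ := volume.restrict (Iio 0))
    (F := fun y t => F (y + t • v)) (F' := fun y t => fderiv ℝ F (y + t • v)) hbound
    (Eventually.of_forall fun y => (hF.continuous.comp (by fun_prop)).aestronglyMeasurable)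
    (hF.continuous.integrable_comp_line hsupp hv x₀).integrableOn
    (hF'.comp (by fun_prop)).aestronglyMeasurable
    (ae_of_all _ fun t y hy => hy t) hint.restrict
    (ae_of_all _ fun t y _ => (hasFDerivAt_comp_add_right (t • v)).mpr
      ((hF.differentiable one_ne_zero _).hasFDerivAt))

theorem rayIntegral_comp_continuousLinearEquiv {W' : Type*} [NormedAddCommGroup W']
    [NormedSpace ℝ W'] (L : W ≃L[ℝ] W') (x : E) :
    rayIntegral (L ∘ F) v x = L (rayIntegral F v x) :=
  L.integral_comp_comm _

theorem iteratedFDeriv_rayIntegral [CompleteSpace W] {j : ℕ} (hF : ContDiff ℝ j F)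
    (hsupp : HasCompactSupport F) (hv : v ≠ 0) :
    iteratedFDeriv ℝ j (rayIntegral F v) = rayIntegral (iteratedFDeriv ℝ j F) v := by
  induction j with
  | zero =>
    ext1 x
    rw [iteratedFDeriv_zero_eq_comp, iteratedFDeriv_zero_eq_comp, Function.comp_apply]
    exact (rayIntegral_comp_continuousLinearEquiv
      (continuousMultilinearCurryFin0 ℝ E W).symm.toContinuousLinearEquiv x).symm
  | succ j ih =>
    have hDj : ContDiff ℝ 1 (iteratedFDeriv ℝ j F) := hF.iteratedFDeriv_right (by norm_cast; omega)
    ext1 x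
    rw [iteratedFDeriv_succ_eq_comp_left, iteratedFDeriv_succ_eq_comp_left, Function.comp_apply,
      ih (hF.of_le (by norm_cast; omega)),
      (hasFDerivAt_rayIntegral hDj (hsupp.iteratedFDeriv j) hv x).fderiv]
    exact (rayIntegral_comp_continuousLinearEquiv (W := E →L[ℝ] E [×j]→L[ℝ] W)
      ((continuousMultilinearCurryLeftEquiv ℝ (fun _ : Fin (j + 1) => E) W).symm
        |>.toContinuousLinearEquiv) x).symm

end RayIntegral

section AddHaar

variable [MeasurableSpace E] [BorelSpace E] [FiniteDimensional ℝ E]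
  (μ : Measure E) [μ.IsAddHaarMeasure]

theorem measure_eq_zero_iff_ae_volume_line_eq_zero {S : Set E} (hS : MeasurableSet S) (v : E) :
    μ S = 0 ↔ ∀ᵐ x ∂μ, volume {t : ℝ | x + t • v ∈ S} = 0 := by
  set A : Set (ℝ × E) := (fun q => q.2 + q.1 • v) ⁻¹' S
  have hA : MeasurableSet A := (measurable_snd.add (measurable_fst.smul_const v)) hS
  have hslices : (volume.prod μ) A = μ S * ⊤ := by
    rw [Measure.prod_apply hA]
    simp_rw [show ∀ t : ℝ, Prod.mk t ⁻¹' A = (· + t • v) ⁻¹' S from fun _ => rfl,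
      measure_preimage_add_right, lintegral_const, Real.volume_univ]
  rw [← show μ S * ⊤ = 0 ↔ μ S = 0 by simp, ← hslices,
    Measure.prod_apply_symm hA, lintegral_eq_zero_iff (measurable_measure_prodMk_right hA)]
  rfl

variable [NormedSpace ℝ W] {F : E → W}

theorem measure_setOf_eq_zero_fderiv_apply_ne_zero (hF : ContDiff ℝ 1 F) (u : E) :
    μ {p | F p = 0 ∧ fderiv ℝ F p u ≠ 0} = 0 := by
  have hmeas : MeasurableSet {p | F p = 0 ∧ fderiv ℝ F p u ≠ 0} :=
    (isClosed_eq hF.continuous continuous_const).measurableSet.inter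
      (isOpen_ne_fun ((hF.continuous_fderiv one_ne_zero).clm_apply continuous_const)
        continuous_const).measurableSet
  refine (measure_eq_zero_iff_ae_volume_line_eq_zero μ hmeas u).mpr (ae_of_all _ fun x => ?_)
  refine measure_mono_null ?_
    ((countable_setOf_eq_zero_deriv_ne_zero fun t : ℝ => F (x + t • u)).measure_zero _)
  intro t ht
  have hderiv : HasDerivAt (fun t : ℝ => F (x + t • u)) (fderiv ℝ F (x + t • u) u) t := by
    simpa [Function.comp_def] using (hF.differentiable one_ne_zero _).hasFDerivAt.comp_hasDerivAt t
      (HasDerivAt.const_add x ((hasDerivAt_id t).smul_const u))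
  exact ⟨ht.1, hderiv.deriv ▸ ht.2⟩

theorem measure_setOf_eq_zero_fderiv_ne_zero (hF : ContDiff ℝ 1 F) :
    μ {p | F p = 0 ∧ fderiv ℝ F p ≠ 0} = 0 := by
  set b := Module.finBasis ℝ E
  refine measure_mono_null (fun p hp => ?_) (measure_iUnion_null fun i =>
    measure_setOf_eq_zero_fderiv_apply_ne_zero μ hF (b i))
  obtain ⟨i, hi⟩ : ∃ i, fderiv ℝ F p (b i) ≠ 0 := by
    by_contra! h
    exact hp.2 (ContinuousLinearMap.coe_injective (b.ext fun i => by simpa using h i))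
  exact mem_iUnion.mpr ⟨i, hp.1, hi⟩

theorem measure_setOf_eq_zero_iteratedFDeriv_ne_zero {j : ℕ} (hF : ContDiff ℝ j F) :
    μ {p | F p = 0 ∧ iteratedFDeriv ℝ j F p ≠ 0} = 0 := by
  induction j with
  | zero => simp [← norm_ne_zero_iff (a := iteratedFDeriv ℝ 0 F _)]
  | succ j ih =>
    have hDj : ContDiff ℝ 1 (iteratedFDeriv ℝ j F) := hF.iteratedFDeriv_right (by norm_cast; omega)
    refine measure_mono_null (fun p hp => ?_) (measure_union_null
      (ih (hF.of_le (by norm_cast; omega))) (measure_setOf_eq_zero_fderiv_ne_zero μ hDj))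
    by_cases hj : iteratedFDeriv ℝ j F p = 0
    · refine Or.inr ⟨hj, fun h => hp.2 ?_⟩
      rw [← norm_eq_zero, ← norm_fderiv_iteratedFDeriv, h]
      exact ContinuousLinearMap.opNorm_zero
    · exact Or.inl ⟨hp.1, hj⟩

theorem ae_volume_setOf_iteratedFDeriv_ne_zero_le {v : E} {j : ℕ} {m : ℝ} (hF : ContDiff ℝ j F)
    (hline : ∀ x, volume {t : ℝ | F (x + t • v) ≠ 0} ≤ ENNReal.ofReal m) :
    ∀ᵐ x ∂μ, volume {t : ℝ | iteratedFDeriv ℝ j F (x + t • v) ≠ 0} ≤ ENNReal.ofReal m := by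
  set N := {p | F p = 0 ∧ iteratedFDeriv ℝ j F p ≠ 0}
  have hN : MeasurableSet N :=
    (isClosed_eq hF.continuous continuous_const).measurableSet.inter
      (isOpen_ne_fun (hF.continuous_iteratedFDeriv le_rfl) continuous_const).measurableSet
  filter_upwards [(measure_eq_zero_iff_ae_volume_line_eq_zero μ hN v).mp
    (measure_setOf_eq_zero_iteratedFDeriv_ne_zero μ hF)] with x hx
  calc volume {t : ℝ | iteratedFDeriv ℝ j F (x + t • v) ≠ 0}
      ≤ volume ({t : ℝ | F (x + t • v) ≠ 0} ∪ {t : ℝ | x + t • v ∈ N}) :=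
        measure_mono fun t ht => by_cases (fun h0 : F (x + t • v) = 0 => Or.inr ⟨h0, ht⟩) Or.inl
    _ ≤ volume {t : ℝ | F (x + t • v) ≠ 0} + volume {t : ℝ | x + t • v ∈ N} := measure_union_le _ _
    _ ≤ ENNReal.ofReal m := by rw [hx, add_zero]; exact hline x

end AddHaar

theorem norm_iteratedFDeriv_rayIntegral_le [NormedSpace ℝ W] [CompleteSpace W]
    [MeasurableSpace E] [BorelSpace E] [FiniteDimensional ℝ E] {F : E → W} {v : E} {j : ℕ}
    {m : ℝ} (hF : ContDiff ℝ j F) (hsupp : HasCompactSupport F) (hv : v ≠ 0) (hm : 0 ≤ m)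
    (hline : ∀ x, volume {t : ℝ | F (x + t • v) ≠ 0} ≤ ENNReal.ofReal m) (x : E) :
    ‖iteratedFDeriv ℝ j (rayIntegral F v) x‖ ≤
      m * sSup (range fun y => ‖iteratedFDeriv ℝ j F y‖) := by
  have hDj : Continuous (iteratedFDeriv ℝ j F) := hF.continuous_iteratedFDeriv le_rfl
  have hsuppj : HasCompactSupport (iteratedFDeriv ℝ j F) := hsupp.iteratedFDeriv j
  rw [iteratedFDeriv_rayIntegral hF hsupp hv]
  have hdense : Dense {x | ‖rayIntegral (iteratedFDeriv ℝ j F) v x‖ ≤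
      m * sSup (range fun y => ‖iteratedFDeriv ℝ j F y‖)} :=
    Measure.dense_of_ae ((ae_volume_setOf_iteratedFDeriv_ne_zero_le Measure.addHaar hF hline).mono
      fun x hx => norm_rayIntegral_le hm (norm_le_sSup_range_norm hDj hsuppj) hx)
  exact (isClosed_le (continuous_rayIntegral hDj hsuppj hv).norm continuous_const).closure_subset
    (hdense x)

/-- Line-integration construction of a potential `g` with `∇_v g = h`, with uniform
bounds on `g` and its derivatives from the thin support of `h` along lines parallel to `v`. -/
theorem stmt_8 (n : ℕ) (h : EuclideanSpace ℝ (Fin (n + 1)) → ℝ)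
    (hcont : Continuous h) (hsupp : HasCompactSupport h)
    (v : EuclideanSpace ℝ (Fin (n + 1))) (hv : ‖v‖ = 1)
    (m : ℝ) (hm : 0 < m)
    (hline : ∀ x, volume {t : ℝ | h (x + t • v) ≠ 0} ≤ ENNReal.ofReal m)
    (g : EuclideanSpace ℝ (Fin (n + 1)) → ℝ)
    (hg : ∀ x, g x = ∫ t in Set.Iio (0 : ℝ), h (x + t • v)) :
    (∀ x, IntegrableOn (fun t : ℝ => h (x + t • v)) (Set.Iio 0)) ∧
    (∀ x, lineDeriv ℝ g x v = h x) ∧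
    (∀ x, |g x| ≤ m * sSup (Set.range fun y => |h y|)) ∧
    (∀ (j : ℕ), ContDiff ℝ j h →
      ∀ x, ‖iteratedFDeriv ℝ j g x‖ ≤ m * sSup (Set.range fun y => ‖iteratedFDeriv ℝ j h y‖)) := by
  have hv0 : v ≠ 0 := norm_ne_zero_iff.mp (hv ▸ one_ne_zero)
  obtain rfl : g = rayIntegral h v := funext hg
  exact ⟨fun x => (hcont.integrable_comp_line hsupp hv0 x).integrableOn,
    lineDeriv_rayIntegral hcont hsupp hv0,
    fun x => norm_rayIntegral_le hm.le (norm_le_sSup_range_norm hcont hsupp) (hline x),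
    fun j hj => norm_iteratedFDeriv_rayIntegral_le hj hsupp hv0 hm.le hline⟩
end

section
/- Let μ be a finite Borel measure on ℝ^{n+1}, let Top be a finite family of sets, and for each R ∈ Top let Stop(R) be a finite family of pairwise disjoint subsets of R, all contained in a family FL_K of pairwise disjoint sets satisfying Σ_{Q ∈ FL_K} μ(Q) ≥ (1−η) μ(R_0), where R_0 ⊃ ⋃_{R∈Top} R and every element of FL_K contained in R belongs to Stop(R). Suppose that Top is partitioned into K−1 layers, each layer consisting of pairwise disjoint sets. Define Nice to be the subfamily of R ∈ Top with Σ_{Q ∈ Stop(R)} μ(Q) ≥ (1 − η^{1/2}) μ(R). Then Σ_{R ∈ Top \ Nice} μ(R) ≤ (K−1) η^{1/2} μ(R_0). -/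
open MeasureTheory
open scoped Classical

/-- Abundance of `Nice` cubes in the alternating-layer construction:
the total measure of the non-nice cubes in `Top` is at most `(K−1)√η μ(R₀)`. -/
theorem stmt_12 {α : Type*} [MeasurableSpace α] (μ : Measure α) [IsFiniteMeasure μ]
    (K : ℕ) (hK : 1 ≤ K) (η : ℝ) (hη : 0 < η) (hη1 : η ≤ 1)
    (R₀ : Set α) (hR₀ : MeasurableSet R₀)
    (FL : Finset (Set α))
    (hFLmeas : ∀ Q ∈ FL, MeasurableSet Q)
    (hFLsub : ∀ Q ∈ FL, Q ⊆ R₀)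
    (hFLdisj : ∀ Q ∈ FL, ∀ Q' ∈ FL, Q ≠ Q' → Disjoint Q Q')
    (hFLfull : (1 - η) * (μ R₀).toReal ≤ ∑ Q ∈ FL, (μ Q).toReal)
    (layers : Fin (K - 1) → Finset (Set α))
    (Top : Finset (Set α))
    (hTop : ∀ R, R ∈ Top ↔ ∃ i, R ∈ layers i)
    (hTopmeas : ∀ R ∈ Top, MeasurableSet R)
    (hTopsub : ∀ R ∈ Top, R ⊆ R₀)
    (hlayerdisj : ∀ i, ∀ R ∈ layers i, ∀ R' ∈ layers i, R ≠ R' → Disjoint R R')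
    -- dyadic nesting: each Q ∈ FL_K is either contained in R or disjoint from R
    (hnest : ∀ R ∈ Top, ∀ Q ∈ FL, Q ⊆ R ∨ Disjoint Q R) :
    ∑ R ∈ Top.filter (fun R =>
        ¬ ((1 - Real.sqrt η) * (μ R).toReal ≤
            ∑ Q ∈ FL.filter (fun Q => Q ⊆ R), (μ Q).toReal)),
      (μ R).toReal
      ≤ ((K - 1 : ℕ) : ℝ) * Real.sqrt η * (μ R₀).toReal := by
  have hsq : 0 < Real.sqrt η := Real.sqrt_pos.2 hη
  set U : Set α := ⋃ Q ∈ FL, Q with hU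
  have hUmeas : MeasurableSet U := Finset.measurableSet_biUnion _ hFLmeas
  have hUsub : U ⊆ R₀ := Set.iUnion₂_subset hFLsub
  have hUμ : μ U = ∑ Q ∈ FL, μ Q := by
    refine measure_biUnion_finset ?_ hFLmeas
    intro Q hQ Q' hQ' hne
    exact hFLdisj Q hQ Q' hQ' hne
  have hfin : ∀ s : Set α, μ s ≠ ⊤ := fun s => measure_ne_top μ s
  -- f R := measure of R minus the union
  set f : Set α → ℝ := fun R => (μ (R \ U)).toReal with hf
  have hf0 : ∀ R, 0 ≤ f R := fun R => ENNReal.toReal_nonneg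
  -- Step A: for R ∈ Top, (μ R).toReal = ∑_{Q ⊆ R} (μ Q).toReal + f R
  have stepA : ∀ R ∈ Top,
      (μ R).toReal = (∑ Q ∈ FL.filter (fun Q => Q ⊆ R), (μ Q).toReal) + f R := by
    intro R hR
    have hRmeas := hTopmeas R hR
    have h1 : μ (R ∩ U) + μ (R \ U) = μ R := measure_inter_add_diff R hUmeas
    have h2 : R ∩ U = ⋃ Q ∈ FL, (Q ∩ R) := by
      simp only [hU, Set.inter_comm R, Set.iUnion_inter]
    have h3 : μ (R ∩ U) = ∑ Q ∈ FL, μ (Q ∩ R) := by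
      rw [h2]
      refine measure_biUnion_finset ?_ (fun Q hQ => (hFLmeas Q hQ).inter hRmeas)
      intro Q hQ Q' hQ' hne
      exact (hFLdisj Q hQ Q' hQ' hne).mono Set.inter_subset_left Set.inter_subset_left
    have h4 : ∑ Q ∈ FL, μ (Q ∩ R) = ∑ Q ∈ FL.filter (fun Q => Q ⊆ R), μ Q := by
      rw [Finset.sum_filter]
      refine Finset.sum_congr rfl fun Q hQ => ?_
      rcases hnest R hR Q hQ with h | h
      · simp [Set.inter_eq_self_of_subset_left h, if_pos h]
      · by_cases hQR : Q ⊆ R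
        · simp [Set.inter_eq_self_of_subset_left hQR, hQR]
        · rw [if_neg hQR, h.inter_eq, measure_empty]
    have : μ R = (∑ Q ∈ FL.filter (fun Q => Q ⊆ R), μ Q) + μ (R \ U) := by
      rw [← h1, h3, h4]
    rw [this, ENNReal.toReal_add (by simp [hfin]) (hfin _), ENNReal.toReal_sum]
    · intro Q _; exact hfin Q
  -- non-nice R satisfy √η * (μ R).toReal ≤ f R
  have stepB : ∀ R ∈ Top.filter (fun R =>
      ¬ ((1 - Real.sqrt η) * (μ R).toReal ≤
          ∑ Q ∈ FL.filter (fun Q => Q ⊆ R), (μ Q).toReal)),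
      Real.sqrt η * (μ R).toReal ≤ f R := by
    intro R hR
    rw [Finset.mem_filter] at hR
    obtain ⟨hRT, hRn⟩ := hR
    push_neg at hRn
    have := stepA R hRT
    nlinarith [hRn, this]
  -- per-layer bound : ∑_{R ∈ layers i} f R ≤ (μ (R₀ \ U)).toReal
  have stepC : ∀ i, ∑ R ∈ layers i, f R ≤ (μ (R₀ \ U)).toReal := by
    intro i
    have hsubTop : ∀ R ∈ layers i, R ∈ Top := fun R hR => (hTop R).2 ⟨i, hR⟩
    have hmeas : ∀ R ∈ layers i, MeasurableSet (R \ U) :=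
      fun R hR => (hTopmeas R (hsubTop R hR)).diff hUmeas
    have hdisj : ∀ R ∈ layers i, ∀ R' ∈ layers i, R ≠ R' → Disjoint (R \ U) (R' \ U) := by
      intro R hR R' hR' hne
      exact (hlayerdisj i R hR R' hR' hne).mono Set.diff_subset Set.diff_subset
    have h1 : ∑ R ∈ layers i, μ (R \ U) = μ (⋃ R ∈ layers i, (R \ U)) :=
      (measure_biUnion_finset hdisj hmeas).symm
    have h2 : μ (⋃ R ∈ layers i, (R \ U)) ≤ μ (R₀ \ U) := by
      refine measure_mono (Set.iUnion₂_subset fun R hR => ?_)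
      exact Set.diff_subset_diff_left (hTopsub R (hsubTop R hR))
    calc ∑ R ∈ layers i, f R = (∑ R ∈ layers i, μ (R \ U)).toReal := by
          rw [ENNReal.toReal_sum]; intro R _; exact hfin _
      _ ≤ (μ (R₀ \ U)).toReal := by
          rw [h1]; exact ENNReal.toReal_mono (hfin _) h2
  -- μ(R₀ \ U).toReal ≤ η * μ(R₀).toReal
  have stepD : (μ (R₀ \ U)).toReal ≤ η * (μ R₀).toReal := by
    have h1 : μ (R₀ \ U) = μ R₀ - μ U := measure_diff hUsub hUmeas.nullMeasurableSet (hfin U)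
    have h2 : (μ (R₀ \ U)).toReal = (μ R₀).toReal - (μ U).toReal := by
      rw [h1, ENNReal.toReal_sub_of_le (measure_mono hUsub) (hfin _)]
    have h3 : (μ U).toReal = ∑ Q ∈ FL, (μ Q).toReal := by
      rw [hUμ, ENNReal.toReal_sum]; intro Q _; exact hfin _
    rw [h2, h3]; nlinarith [hFLfull]
  -- sum over Top bounded by sum over layers
  have stepE : ∑ R ∈ Top, f R ≤ ∑ i : Fin (K - 1), ∑ R ∈ layers i, f R := by
    calc ∑ R ∈ Top, f R ≤ ∑ R ∈ Top, ∑ i : Fin (K-1), (if R ∈ layers i then f R else 0) := by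
          refine Finset.sum_le_sum fun R hR => ?_
          obtain ⟨i, hi⟩ := (hTop R).1 hR
          have := Finset.single_le_sum (f := fun i => if R ∈ layers i then f R else 0)
            (fun j _ => by positivity) (Finset.mem_univ i)
          simpa [hi] using this
      _ = ∑ i : Fin (K-1), ∑ R ∈ Top, (if R ∈ layers i then f R else 0) :=
          Finset.sum_comm
      _ = ∑ i : Fin (K-1), ∑ R ∈ layers i, f R := by
          refine Finset.sum_congr rfl fun i _ => ?_
          rw [← Finset.sum_filter]
          refine Finset.sum_congr ?_ (fun _ _ => rfl)
          ext R
          simp only [Finset.mem_filter]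
          exact ⟨fun h => h.2, fun h => ⟨(hTop R).2 ⟨i, h⟩, h⟩⟩
  -- combine
  have key : Real.sqrt η * ∑ R ∈ Top.filter (fun R =>
      ¬ ((1 - Real.sqrt η) * (μ R).toReal ≤
          ∑ Q ∈ FL.filter (fun Q => Q ⊆ R), (μ Q).toReal)), (μ R).toReal
      ≤ ((K - 1 : ℕ) : ℝ) * η * (μ R₀).toReal := by
    calc Real.sqrt η * ∑ R ∈ _, (μ R).toReal
        = ∑ R ∈ Top.filter (fun R =>
            ¬ ((1 - Real.sqrt η) * (μ R).toReal ≤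
                ∑ Q ∈ FL.filter (fun Q => Q ⊆ R), (μ Q).toReal)),
            Real.sqrt η * (μ R).toReal := Finset.mul_sum _ _ _
      _ ≤ ∑ R ∈ Top.filter (fun R =>
            ¬ ((1 - Real.sqrt η) * (μ R).toReal ≤
                ∑ Q ∈ FL.filter (fun Q => Q ⊆ R), (μ Q).toReal)), f R :=
          Finset.sum_le_sum stepB
      _ ≤ ∑ R ∈ Top, f R :=
          Finset.sum_le_sum_of_subset_of_nonneg (Finset.filter_subset _ _)
            (fun R _ _ => hf0 R)
      _ ≤ ∑ i : Fin (K - 1), ∑ R ∈ layers i, f R := stepE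
      _ ≤ ∑ i : Fin (K - 1), η * (μ R₀).toReal :=
          Finset.sum_le_sum fun i _ => (stepC i).trans stepD
      _ = ((K - 1 : ℕ) : ℝ) * η * (μ R₀).toReal := by
          simp [Finset.sum_const, mul_assoc]
  have hηsq : Real.sqrt η * Real.sqrt η = η := Real.mul_self_sqrt hη.le
  refine le_of_mul_le_mul_left (key.trans_eq ?_) hsq
  linear_combination (-((K - 1 : ℕ) : ℝ) * (μ R₀).toReal) * hηsq
end
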